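/- Let γ > −3 and set l := max{γ+2, 3/2}. There exists a constant C > 0 (depending only on γ) such that for all measurable g, f : ℝ³ → ℝ, ∫_{ℝ³}∫_{ℝ³} |v−v*|^γ |g(v*)| |f(v)| dv* dv ≤ C ‖g‖_{L²_l} ‖f‖_{L²_l} (inequality in [0,∞]). -/

import Mathlib

open MeasureTheory Real
open scoped ENNReal RealInnerProductSpace Classical

noncomputable section

/-- velocity space ℝ³ -/
abbrev E3 : Type := EuclideanSpace ℝ (Fin 3)

/-- the unit sphere 𝕊² ⊆ ℝ³ -/
abbrev S2 : Type := Metric.sphere (0 : E3) 1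

/-- surface measure on the unit sphere -/
noncomputable instance : MeasureSpace S2 := ⟨(volume : Measure E3).toSphere⟩

/-- Japanese bracket ⟨v⟩ = √(1+|v|²). -/
def jap (v : E3) : ℝ := Real.sqrt (1 + ‖v‖ ^ 2)

/-- Post-collision velocity v' = (v+v*)/2 + (|v-v*|/2)σ. -/
def vP (v w : E3) (σ : S2) : E3 := (2⁻¹ : ℝ) • (v + w) + (‖v - w‖ / 2) • (σ : E3)

/-- Post-collision velocity v*' = (v+v*)/2 - (|v-v*|/2)σ. -/
def vsP (v w : E3) (σ : S2) : E3 := (2⁻¹ : ℝ) • (v + w) - (‖v - w‖ / 2) • (σ : E3)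

/-- cos θ = ((v-v*)/|v-v*|)·σ. -/
def cosTheta (v w : E3) (σ : S2) : ℝ := ⟪v - w, (σ : E3)⟫ / ‖v - w‖

/-- sin(θ/2) = √((1-cos θ)/2). -/
def sinHalf (v w : E3) (σ : S2) : ℝ := Real.sqrt ((1 - cosTheta v w σ) / 2)

/-- cos(θ/2) = √((1+cos θ)/2). -/
def cosHalf (v w : E3) (σ : S2) : ℝ := Real.sqrt ((1 + cosTheta v w σ) / 2)

/-- a fixed reference unit direction, used to express rotation-invariant angular integrals -/
def e1 : E3 := EuclideanSpace.single 0 1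

/-- cos θ for the deviation angle of σ relative to the fixed direction `e1` -/
def cos1 (σ : S2) : ℝ := ⟪e1, (σ : E3)⟫

def sinHalf1 (σ : S2) : ℝ := Real.sqrt ((1 - cos1 σ) / 2)

def cosHalf1 (σ : S2) : ℝ := Real.sqrt ((1 + cos1 σ) / 2)

/-- the standard Maxwellian μ(v) = (2π)^{-3/2} e^{-|v|²/2} -/
def maxw (v : E3) : ℝ := (2 * π) ^ (-(3 : ℝ) / 2) * Real.exp (-‖v‖ ^ 2 / 2)

/-- Grad's angular cutoff assumption (A2): `bf` is measurable, nonnegative,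
`K ≤ bf ≤ K⁻¹` on `[0,1]` for some `K > 0`, and `bf` vanishes on negatives. -/
def gradCutoff (bf : ℝ → ℝ) : Prop :=
  Measurable bf ∧ (∀ t, 0 ≤ bf t) ∧
    (∃ K : ℝ, 0 < K ∧ ∀ t ∈ Set.Icc (0 : ℝ) 1, K ≤ bf t ∧ bf t ≤ K⁻¹) ∧
    ∀ t : ℝ, t < 0 → bf t = 0

/-- gain operator Q⁺ -/
def Qgain (γ : ℝ) (bf : ℝ → ℝ) (f g : E3 → ℝ) (v : E3) : ℝ :=
  ∫ w : E3, ∫ σ : S2, ‖v - w‖ ^ γ * bf (cosTheta v w σ) * (f (vsP v w σ) * g (vP v w σ))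

/-- loss operator Q⁻ -/
def Qloss (γ : ℝ) (bf : ℝ → ℝ) (f g : E3 → ℝ) (v : E3) : ℝ :=
  ∫ w : E3, ∫ σ : S2, ‖v - w‖ ^ γ * bf (cosTheta v w σ) * (f w * g v)

/-- the Boltzmann collision operator Q = Q⁺ - Q⁻ -/
def Qcol (γ : ℝ) (bf : ℝ → ℝ) (f g : E3 → ℝ) (v : E3) : ℝ :=
  ∫ w : E3, ∫ σ : S2, ‖v - w‖ ^ γ * bf (cosTheta v w σ) *
    (f (vsP v w σ) * g (vP v w σ) - f w * g v)

/-- collision frequency ν(v) -/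
def nuF (γ : ℝ) (bf : ℝ → ℝ) (v : E3) : ℝ :=
  ∫ w : E3, ∫ σ : S2, ‖v - w‖ ^ γ * bf (cosTheta v w σ) * maxw w

/-- squared weighted norm ‖f‖²_{L²_q} -/
def wSqR (q : ℝ) (f : E3 → ℝ) : ℝ := ∫ v : E3, f v ^ 2 * jap v ^ (2 * q)

/-- weighted norm ‖f‖_{L²_q} -/
def wNorm (q : ℝ) (f : E3 → ℝ) : ℝ := Real.sqrt (wSqR q f)

/-- squared star norm ‖f‖²_{L²_{k+γ/2,*}} = ∫∫ μ(v*)|v-v*|^γ f(v)² ⟨v⟩^{2k} -/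
def starSq (γ k : ℝ) (f : E3 → ℝ) : ℝ :=
  ∫ v : E3, ∫ w : E3, maxw w * ‖v - w‖ ^ γ * f v ^ 2 * jap v ^ (2 * k)

/-- star norm ‖f‖_{L²_{k+γ/2,*}} -/
def starNorm (γ k : ℝ) (f : E3 → ℝ) : ℝ := Real.sqrt (starSq γ k f)

/-- squared exponentially weighted norm ‖f‖²_{L²_{q,a,b}} -/
def expSq (q a b : ℝ) (f : E3 → ℝ) : ℝ :=
  ∫ v : E3, f v ^ 2 * jap v ^ (2 * q) * Real.exp (2 * a * jap v ^ b)

/-- exponentially weighted norm ‖f‖_{L²_{q,a,b}} -/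
def expNorm (q a b : ℝ) (f : E3 → ℝ) : ℝ := Real.sqrt (expSq q a b f)

/-- squared weighted L² norm in ℝ≥0∞ (possibly infinite) -/
def wSq (q : ℝ) (f : E3 → ℝ) : ℝ≥0∞ := ∫⁻ v : E3, ENNReal.ofReal (f v ^ 2 * jap v ^ (2 * q))

/-!
For `γ < 0` we use Schur's test with test function `⟨v⟩^{-l}`: it needs
`sup_{v*} ∫ |v - v*|^γ ⟨v⟩^{-2l} dv < ∞`. Near the diagonal `|v - v*|^γ` is locally integrable
since `γ > -3`; away from it `|v - v*|^γ ⟨v⟩^{-2l} ≲ ⟨v - v*⟩^{γ-2l} + ⟨v⟩^{γ-2l}`, and both are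
integrable because `2l ≥ 3` makes `γ - 2l < -3`.
For `γ ≥ 0`, `|v - v*| ≤ ⟨v⟩⟨v*⟩` bounds the kernel by the rank-one kernel `⟨v⟩^γ ⟨v*⟩^γ`, and
Cauchy–Schwarz in each variable closes the estimate because `l ≥ γ + 2` makes `⟨v⟩^{2(γ-l)}`
integrable.
-/

open Set Metric

section Schur

variable {α : Type*} [MeasurableSpace α] {μ : Measure α}

theorem lintegral_mul_le_sqrt_mul_sqrt {f g : α → ℝ≥0∞} (hf : AEMeasurable f μ)
    (hg : AEMeasurable g μ) :
    ∫⁻ x, f x * g x ∂μ ≤ (∫⁻ x, f x ^ 2 ∂μ) ^ (1 / 2 : ℝ) * (∫⁻ x, g x ^ 2 ∂μ) ^ (1 / 2 : ℝ) := by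
  simpa [ENNReal.rpow_two] using
    ENNReal.lintegral_mul_le_Lp_mul_Lq μ Real.HolderConjugate.two_two hf hg

theorem ENNReal.rpow_one_half_mul_self (A : ℝ≥0∞) : A ^ (1 / 2 : ℝ) * A ^ (1 / 2 : ℝ) = A := by
  rw [← ENNReal.rpow_add_of_nonneg _ _ (by norm_num) (by norm_num)]; norm_num

theorem lintegral_mul_le_sqrt_mul_sqrt_of_weight {ρ φ F : α → ℝ≥0∞} (hρ : Measurable ρ)
    (hρ0 : ∀ v, ρ v ≠ 0) (hρtop : ∀ v, ρ v ≠ ∞) (hφ : Measurable φ) (hF : Measurable F) :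
    ∫⁻ v, φ v * F v ∂μ ≤
      (∫⁻ v, (φ v * (ρ v)⁻¹) ^ 2 ∂μ) ^ (1 / 2 : ℝ) * (∫⁻ v, (F v * ρ v) ^ 2 ∂μ) ^ (1 / 2 : ℝ) := by
  calc ∫⁻ v, φ v * F v ∂μ = ∫⁻ v, φ v * (ρ v)⁻¹ * (F v * ρ v) ∂μ := by
        congr 1; ext v
        rw [mul_mul_mul_comm, ENNReal.inv_mul_cancel (hρ0 v) (hρtop v), mul_one]
    _ ≤ _ := lintegral_mul_le_sqrt_mul_sqrt (by fun_prop) (by fun_prop)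

theorem lintegral_lintegral_mul_le_of_le_mul {K : α → α → ℝ≥0∞} {ρ φ F G : α → ℝ≥0∞}
    (hK : ∀ v w, K v w ≤ φ v * φ w) (hρ : Measurable ρ) (hρ0 : ∀ v, ρ v ≠ 0)
    (hρtop : ∀ v, ρ v ≠ ∞) (hφ : Measurable φ) (hF : Measurable F) (hG : Measurable G) :
    ∫⁻ v, ∫⁻ w, K v w * G w * F v ∂μ ∂μ ≤
      (∫⁻ v, (φ v * (ρ v)⁻¹) ^ 2 ∂μ) * (∫⁻ w, (G w * ρ w) ^ 2 ∂μ) ^ (1 / 2 : ℝ) *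
        (∫⁻ v, (F v * ρ v) ^ 2 ∂μ) ^ (1 / 2 : ℝ) := by
  set B := ∫⁻ v, (φ v * (ρ v)⁻¹) ^ 2 ∂μ
  calc ∫⁻ v, ∫⁻ w, K v w * G w * F v ∂μ ∂μ ≤ ∫⁻ v, ∫⁻ w, φ v * F v * (φ w * G w) ∂μ ∂μ := by
        refine lintegral_mono fun v => lintegral_mono fun w => ?_
        calc K v w * G w * F v ≤ φ v * φ w * G w * F v := by gcongr; exact hK v w
          _ = φ v * F v * (φ w * G w) := by ring
    _ = (∫⁻ v, φ v * F v ∂μ) * ∫⁻ w, φ w * G w ∂μ :=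
        lintegral_lintegral_mul (by fun_prop) (by fun_prop)
    _ ≤ (B ^ (1 / 2 : ℝ) * (∫⁻ v, (F v * ρ v) ^ 2 ∂μ) ^ (1 / 2 : ℝ)) *
          (B ^ (1 / 2 : ℝ) * (∫⁻ w, (G w * ρ w) ^ 2 ∂μ) ^ (1 / 2 : ℝ)) :=
        mul_le_mul' (lintegral_mul_le_sqrt_mul_sqrt_of_weight hρ hρ0 hρtop hφ hF)
          (lintegral_mul_le_sqrt_mul_sqrt_of_weight hρ hρ0 hρtop hφ hG)
    _ = _ := by
        conv_rhs => rw [← ENNReal.rpow_one_half_mul_self B]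
        ring

/-- Schur's test for a symmetric kernel, with test function `ρ⁻¹`. -/
theorem lintegral_lintegral_mul_le_of_schur [SFinite μ] {K : α → α → ℝ≥0∞}
    (hK : Measurable (Function.uncurry K)) (hsymm : ∀ v w, K v w = K w v)
    {ρ : α → ℝ≥0∞} (hρ : Measurable ρ) (hρ0 : ∀ v, ρ v ≠ 0) (hρtop : ∀ v, ρ v ≠ ∞)
    {A : ℝ≥0∞} (hA : ∀ w, ∫⁻ v, K v w * (ρ v)⁻¹ ^ 2 ∂μ ≤ A)
    {F G : α → ℝ≥0∞} (hF : Measurable F) (hG : Measurable G) :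
    ∫⁻ v, ∫⁻ w, K v w * G w * F v ∂μ ∂μ ≤
      A * (∫⁻ w, (G w * ρ w) ^ 2 ∂μ) ^ (1 / 2 : ℝ) * (∫⁻ v, (F v * ρ v) ^ 2 ∂μ) ^ (1 / 2 : ℝ) := by
  -- Cauchy–Schwarz on `μ × μ` after splitting `K v w * G w * F v` as
  -- `(√K * G w * ρ w / ρ v) * (√K * F v * ρ v / ρ w)`.
  set a : α × α → ℝ≥0∞ := fun p => K p.1 p.2 ^ (1 / 2 : ℝ) * (G p.2 * ρ p.2) * (ρ p.1)⁻¹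
  set b : α × α → ℝ≥0∞ := fun p => K p.1 p.2 ^ (1 / 2 : ℝ) * (F p.1 * ρ p.1) * (ρ p.2)⁻¹
  have hab : ∀ p, a p * b p = K p.1 p.2 * G p.2 * F p.1 := fun p => by
    calc a p * b p = K p.1 p.2 ^ (1 / 2 : ℝ) * K p.1 p.2 ^ (1 / 2 : ℝ) * G p.2 * F p.1
          * (ρ p.1 * (ρ p.1)⁻¹) * (ρ p.2 * (ρ p.2)⁻¹) := by simp only [a, b]; ring
      _ = _ := by rw [ENNReal.rpow_one_half_mul_self, ENNReal.mul_inv_cancel (hρ0 _) (hρtop _),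
          ENNReal.mul_inv_cancel (hρ0 _) (hρtop _), mul_one, mul_one]
  have ha : Measurable a := by fun_prop
  have hb : Measurable b := by fun_prop
  have hrow : ∀ H : α → ℝ≥0∞, Measurable H →
      ∫⁻ y, ∫⁻ x, (K x y ^ (1 / 2 : ℝ) * (H y * ρ y) * (ρ x)⁻¹) ^ 2 ∂μ ∂μ
        ≤ A * ∫⁻ y, (H y * ρ y) ^ 2 ∂μ := fun H hH => by
    have hsq : ∀ x y, (K x y ^ (1 / 2 : ℝ) * (H y * ρ y) * (ρ x)⁻¹) ^ 2
        = (H y * ρ y) ^ 2 * (K x y * (ρ x)⁻¹ ^ 2) := fun x y => by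
      rw [mul_pow, mul_pow, sq (K x y ^ _), ENNReal.rpow_one_half_mul_self]
      ring
    simp_rw [hsq]
    calc ∫⁻ y, ∫⁻ x, (H y * ρ y) ^ 2 * (K x y * (ρ x)⁻¹ ^ 2) ∂μ ∂μ
        = ∫⁻ y, (H y * ρ y) ^ 2 * ∫⁻ x, K x y * (ρ x)⁻¹ ^ 2 ∂μ ∂μ := by
          congr 1; ext y; exact lintegral_const_mul _ (by fun_prop)
      _ ≤ ∫⁻ y, (H y * ρ y) ^ 2 * A ∂μ := by gcongr with y; exact hA y
      _ = A * ∫⁻ y, (H y * ρ y) ^ 2 ∂μ := by rw [lintegral_mul_const _ (by fun_prop), mul_comm]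
  have hSa : ∫⁻ p, a p ^ 2 ∂μ.prod μ ≤ A * ∫⁻ w, (G w * ρ w) ^ 2 ∂μ := by
    rw [lintegral_prod_symm _ (ha.pow_const 2).aemeasurable]
    exact hrow G hG
  have hSb : ∫⁻ p, b p ^ 2 ∂μ.prod μ ≤ A * ∫⁻ v, (F v * ρ v) ^ 2 ∂μ := by
    rw [lintegral_prod _ (hb.pow_const 2).aemeasurable]
    refine le_of_eq_of_le ?_ (hrow F hF)
    simp only [b, hsymm]
  calc ∫⁻ v, ∫⁻ w, K v w * G w * F v ∂μ ∂μ = ∫⁻ p, a p * b p ∂μ.prod μ := by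
        simp_rw [hab]
        exact (lintegral_prod _ ((hK.mul (hG.comp measurable_snd)).mul
          (hF.comp measurable_fst)).aemeasurable).symm
    _ ≤ (∫⁻ p, a p ^ 2 ∂μ.prod μ) ^ (1 / 2 : ℝ) * (∫⁻ p, b p ^ 2 ∂μ.prod μ) ^ (1 / 2 : ℝ) :=
        lintegral_mul_le_sqrt_mul_sqrt ha.aemeasurable hb.aemeasurable
    _ ≤ (A * ∫⁻ w, (G w * ρ w) ^ 2 ∂μ) ^ (1 / 2 : ℝ) *
          (A * ∫⁻ v, (F v * ρ v) ^ 2 ∂μ) ^ (1 / 2 : ℝ) := by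
        gcongr
    _ = _ := by
        rw [ENNReal.mul_rpow_of_nonneg _ _ (by norm_num),
          ENNReal.mul_rpow_of_nonneg _ _ (by norm_num)]
        conv_rhs => rw [← ENNReal.rpow_one_half_mul_self A]
        ring

end Schur

section

variable {E : Type*} [NormedAddCommGroup E] [NormedSpace ℝ E] [FiniteDimensional ℝ E]
  [MeasurableSpace E] [BorelSpace E]

theorem lintegral_closedBall_norm_rpow_lt_top (μ : Measure E) [μ.IsAddHaarMeasure]
    (hd : 1 ≤ Module.finrank ℝ E) {γ : ℝ} (hγ : -(Module.finrank ℝ E : ℝ) < γ) (r : ℝ) :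
    ∫⁻ u in closedBall 0 r, ENNReal.ofReal (‖u‖ ^ γ) ∂μ < ∞ := by
  have hloc : LocallyIntegrable (fun u : E => ‖u‖ ^ γ) μ :=
    locallyIntegrable_of_norm_le_rpow (C := 1) (α := -γ) hd (by linarith)
      (Filter.Eventually.of_forall fun u => by simp [abs_of_nonneg (rpow_nonneg (norm_nonneg u) γ)])
      (measurable_norm.pow_const γ).aestronglyMeasurable
  exact (hloc.integrableOn_isCompact (isCompact_closedBall 0 r)).setLIntegral_lt_top

end

theorem rpow_mul_rpow_le_rpow_add_add_rpow_add {a b p q : ℝ} (ha : 0 < a) (hb : 0 < b)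
    (hp : p ≤ 0) (hq : q ≤ 0) : a ^ p * b ^ q ≤ a ^ (p + q) + b ^ (p + q) := by
  rcases le_total a b with hab | hab
  · have : a ^ p * b ^ q ≤ a ^ (p + q) := by
      rw [rpow_add ha]
      exact mul_le_mul_of_nonneg_left (rpow_le_rpow_of_nonpos ha hab hq) (rpow_nonneg ha.le p)
    linarith [rpow_nonneg hb.le (p + q)]
  · have : a ^ p * b ^ q ≤ b ^ (p + q) := by
      rw [add_comm p q, rpow_add hb, mul_comm]
      exact mul_le_mul_of_nonneg_left (rpow_le_rpow_of_nonpos hb hab hp) (rpow_nonneg hb.le q)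
    linarith [rpow_nonneg ha.le (p + q)]

theorem jap_pos (v : E3) : 0 < jap v := Real.sqrt_pos.2 (by positivity)

theorem one_le_jap (v : E3) : 1 ≤ jap v := Real.one_le_sqrt.2 (by linarith [sq_nonneg ‖v‖])

theorem jap_rpow (v : E3) (s : ℝ) : jap v ^ s = (1 + ‖v‖ ^ 2) ^ (s / 2) := by
  rw [jap, Real.sqrt_eq_rpow, ← rpow_mul (by positivity)]
  congr 1; ring

theorem norm_sub_le_jap_mul_jap (v w : E3) : ‖v - w‖ ≤ jap v * jap w := by
  rw [jap, jap, ← Real.sqrt_mul (by positivity)]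
  refine Real.le_sqrt_of_sq_le ?_
  nlinarith [norm_sub_le v w, norm_nonneg v, norm_nonneg w, norm_nonneg (v - w),
    sq_nonneg (1 - ‖v‖ * ‖w‖)]

theorem norm_rpow_le_two_rpow_mul_jap_rpow {γ : ℝ} (hγ : γ ≤ 0) {u : E3} (hu : 1 ≤ ‖u‖) :
    ‖u‖ ^ γ ≤ 2 ^ (-γ / 2) * jap u ^ γ := by
  have h : (2 * ‖u‖ ^ 2) ^ (γ / 2) ≤ jap u ^ γ := by
    rw [jap_rpow]; exact rpow_le_rpow_of_nonpos (by positivity) (by nlinarith) (by linarith)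
  rw [mul_rpow (by norm_num) (by positivity), ← rpow_natCast, ← rpow_mul (norm_nonneg u),
    Nat.cast_ofNat, mul_div_cancel₀ _ two_ne_zero] at h
  calc ‖u‖ ^ γ = 2 ^ (-γ / 2) * (2 ^ (γ / 2) * ‖u‖ ^ γ) := by
        rw [← mul_assoc, ← rpow_add two_pos, neg_div, neg_add_cancel, rpow_zero, one_mul]
    _ ≤ 2 ^ (-γ / 2) * jap u ^ γ := by gcongr

theorem lintegral_jap_rpow_lt_top {s : ℝ} (hs : s < -3) :
    ∫⁻ v : E3, ENNReal.ofReal (jap v ^ s) < ∞ := by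
  have h : (Module.finrank ℝ E3 : ℝ) < -s := by
    rw [finrank_euclideanSpace_fin]; push_cast; linarith
  have hint := (integrable_rpow_neg_one_add_norm_sq (μ := (volume : Measure E3)) h).lintegral_lt_top
  simp only [jap_rpow]
  convert hint using 5
  ring

theorem wSq_eq_lintegral_sq (q : ℝ) (f : E3 → ℝ) :
    wSq q f = ∫⁻ v, (ENNReal.ofReal |f v| * ENNReal.ofReal (jap v ^ q)) ^ 2 := by
  unfold wSq
  congr 1; ext v
  rw [← ENNReal.ofReal_mul (abs_nonneg _),
    ← ENNReal.ofReal_pow (mul_nonneg (abs_nonneg _) (rpow_nonneg (jap_pos v).le _)), mul_pow,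
    sq_abs, ← rpow_natCast (jap v ^ q), ← rpow_mul (jap_pos v).le, Nat.cast_ofNat, mul_comm q]

theorem inv_ofReal_jap_rpow_sq (v : E3) (q : ℝ) :
    (ENNReal.ofReal (jap v ^ q))⁻¹ ^ 2 = ENNReal.ofReal (jap v ^ (-2 * q)) := by
  rw [← ENNReal.ofReal_inv_of_pos (rpow_pos_of_pos (jap_pos v) q),
    ← ENNReal.ofReal_pow (inv_nonneg.2 (rpow_nonneg (jap_pos v).le q)), ← rpow_neg (jap_pos v).le,
    ← rpow_natCast, ← rpow_mul (jap_pos v).le, Nat.cast_ofNat, neg_mul_comm, mul_comm]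

theorem lintegral_norm_sub_rpow_mul_jap_rpow_le {γ l : ℝ} (hγ : γ ≤ 0) (hl : 0 ≤ l) (w : E3) :
    ∫⁻ v, ENNReal.ofReal (‖v - w‖ ^ γ) * ENNReal.ofReal (jap v ^ (-2 * l)) ≤
      (∫⁻ u in closedBall (0 : E3) 1, ENNReal.ofReal (‖u‖ ^ γ)) +
        ENNReal.ofReal (2 ^ (-γ / 2)) * (2 * ∫⁻ u, ENNReal.ofReal (jap u ^ (γ - 2 * l))) := by
  set c := ENNReal.ofReal (2 ^ (-γ / 2))
  set N : E3 → ℝ≥0∞ := (closedBall 0 1).indicator fun u => ENNReal.ofReal (‖u‖ ^ γ)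
  set J : E3 → ℝ≥0∞ := fun u => ENNReal.ofReal (jap u ^ (γ - 2 * l))
  have hN : Measurable N :=
    (measurable_norm.pow_const γ).ennreal_ofReal.indicator measurableSet_closedBall
  have hJ : Measurable J := by unfold J jap; fun_prop
  have hpt : ∀ v, ENNReal.ofReal (‖v - w‖ ^ γ) * ENNReal.ofReal (jap v ^ (-2 * l)) ≤
      N (v - w) + c * (J (v - w) + J v) := fun v => by
    have hjap : 0 ≤ jap v ^ (-2 * l) := rpow_nonneg (jap_pos v).le _
    rw [← ENNReal.ofReal_mul (by positivity)]
    simp only [N]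
    by_cases hu : ‖v - w‖ ≤ 1
    · rw [indicator_of_mem (mem_closedBall_zero_iff.2 hu)]
      refine le_add_right (ENNReal.ofReal_le_ofReal ?_)
      exact mul_le_of_le_one_right (by positivity)
        (rpow_le_one_of_one_le_of_nonpos (one_le_jap v) (by linarith))
    · rw [indicator_of_notMem (mt mem_closedBall_zero_iff.1 hu), zero_add,
        ← ENNReal.ofReal_add (rpow_nonneg (jap_pos _).le _) (rpow_nonneg (jap_pos _).le _),
        ← ENNReal.ofReal_mul (by positivity)]
      refine ENNReal.ofReal_le_ofReal ?_
      calc ‖v - w‖ ^ γ * jap v ^ (-2 * l)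
          ≤ 2 ^ (-γ / 2) * jap (v - w) ^ γ * jap v ^ (-2 * l) :=
            mul_le_mul_of_nonneg_right
              (norm_rpow_le_two_rpow_mul_jap_rpow hγ (by linarith)) hjap
        _ ≤ 2 ^ (-γ / 2) * (jap (v - w) ^ (γ - 2 * l) + jap v ^ (γ - 2 * l)) := by
            rw [mul_assoc, show γ - 2 * l = γ + -2 * l by ring]
            gcongr
            exact rpow_mul_rpow_le_rpow_add_add_rpow_add (jap_pos _) (jap_pos v) hγ
              (by linarith)
  calc _ ≤ ∫⁻ v, (N (v - w) + c * (J (v - w) + J v)) := lintegral_mono hpt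
    _ = _ := by
        rw [lintegral_add_left (f := fun v => N (v - w)) (hN.comp (measurable_sub_const w)),
          lintegral_const_mul c (f := fun v => J (v - w) + J v)
            ((hJ.comp (measurable_sub_const w)).add hJ),
          lintegral_add_left (f := fun v => J (v - w)) (hJ.comp (measurable_sub_const w)),
          lintegral_sub_right_eq_self N w, lintegral_sub_right_eq_self J w,
          lintegral_indicator measurableSet_closedBall, two_mul]

theorem ofReal_jap_rpow_mul_inv_sq (v : E3) (p q : ℝ) :
    (ENNReal.ofReal (jap v ^ p) * (ENNReal.ofReal (jap v ^ q))⁻¹) ^ 2 =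
      ENNReal.ofReal (jap v ^ (2 * (p - q))) := by
  rw [mul_pow, inv_ofReal_jap_rpow_sq, ← ENNReal.ofReal_pow (rpow_nonneg (jap_pos v).le _),
    ← ENNReal.ofReal_mul (by positivity), ← rpow_natCast, ← rpow_mul (jap_pos v).le,
    ← rpow_add (jap_pos v)]
  ring_nf

/-- The kernel `|v - v*|^γ` defines a bounded bilinear form on `L²_l`, with `ℝ≥0∞`-valued
functions standing for `|f|`. -/
def PowerKernelBoundedOnL2 (γ l : ℝ) : Prop :=
  ∃ A < ∞, ∀ F G : E3 → ℝ≥0∞, Measurable F → Measurable G →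
    ∫⁻ v, ∫⁻ w, ENNReal.ofReal (‖v - w‖ ^ γ) * G w * F v ≤
      A * (∫⁻ w, (G w * ENNReal.ofReal (jap w ^ l)) ^ 2) ^ (1 / 2 : ℝ) *
        (∫⁻ v, (F v * ENNReal.ofReal (jap v ^ l)) ^ 2) ^ (1 / 2 : ℝ)

theorem powerKernelBoundedOnL2_of_neg {γ l : ℝ} (hγ : -3 < γ) (hγ0 : γ < 0) (hl : 3 ≤ 2 * l) :
    PowerKernelBoundedOnL2 γ l := by
  have hball := lintegral_closedBall_norm_rpow_lt_top (volume : Measure E3) (by simp)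
    (γ := γ) (by simpa using hγ) 1
  have hjap := lintegral_jap_rpow_lt_top (s := γ - 2 * l) (by linarith)
  refine ⟨(∫⁻ u in closedBall (0 : E3) 1, ENNReal.ofReal (‖u‖ ^ γ)) +
      ENNReal.ofReal (2 ^ (-γ / 2)) * (2 * ∫⁻ u, ENNReal.ofReal (jap u ^ (γ - 2 * l))),
    ?finite, fun F G hF hG => lintegral_lintegral_mul_le_of_schur
    (by unfold Function.uncurry; fun_prop) (fun v w => by rw [norm_sub_rev])
    (by unfold jap; fun_prop)
    (fun v => (ENNReal.ofReal_pos.2 (rpow_pos_of_pos (jap_pos v) l)).ne')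
    (fun _ => ENNReal.ofReal_ne_top) (fun w => ?bound) hF hG⟩
  case bound =>
    simp_rw [inv_ofReal_jap_rpow_sq]
    exact lintegral_norm_sub_rpow_mul_jap_rpow_le hγ0.le (by linarith) w
  case finite =>
    exact ENNReal.add_lt_top.2 ⟨hball, ENNReal.mul_lt_top ENNReal.ofReal_lt_top
      (ENNReal.mul_lt_top ENNReal.ofNat_lt_top hjap)⟩

theorem powerKernelBoundedOnL2_of_nonneg {γ l : ℝ} (hγ0 : 0 ≤ γ) (hl : 2 * γ + 3 < 2 * l) :
    PowerKernelBoundedOnL2 γ l := by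
  have hK : ∀ v w : E3, ENNReal.ofReal (‖v - w‖ ^ γ) ≤
      ENNReal.ofReal (jap v ^ γ) * ENNReal.ofReal (jap w ^ γ) := fun v w => by
    rw [← ENNReal.ofReal_mul (rpow_nonneg (jap_pos v).le _),
      ← mul_rpow (jap_pos v).le (jap_pos w).le]
    exact ENNReal.ofReal_le_ofReal (rpow_le_rpow (norm_nonneg _) (norm_sub_le_jap_mul_jap v w) hγ0)
  refine ⟨_, ?_, fun F G hF hG => lintegral_lintegral_mul_le_of_le_mul hK
    (by unfold jap; fun_prop) (fun v => (ENNReal.ofReal_pos.2 (rpow_pos_of_pos (jap_pos v) l)).ne')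
    (fun _ => ENNReal.ofReal_ne_top) (by unfold jap; fun_prop) hF hG⟩
  simp_rw [ofReal_jap_rpow_mul_inv_sq]
  exact lintegral_jap_rpow_lt_top (by linarith)

theorem powerKernelBoundedOnL2 {γ : ℝ} (hγ : -3 < γ) :
    PowerKernelBoundedOnL2 γ (max (γ + 2) (3 / 2)) := by
  have hl₁ : γ + 2 ≤ max (γ + 2) (3 / 2) := le_max_left _ _
  have hl₂ : 3 / 2 ≤ max (γ + 2) (3 / 2) := le_max_right _ _
  rcases lt_or_ge γ 0 with hγ0 | hγ0
  · exact powerKernelBoundedOnL2_of_neg hγ hγ0 (by linarith)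
  · exact powerKernelBoundedOnL2_of_nonneg hγ0 (by linarith)

/-- bilinear estimate ∫∫ |v-v*|^γ |g(v*)| |f(v)| ≤ C ‖g‖_{L²_l} ‖f‖_{L²_l},
with l = max (γ+2) (3/2). -/
theorem stmt4 (γ : ℝ) (hγ : -3 < γ) :
    ∃ C : ℝ, 0 < C ∧ ∀ f g : E3 → ℝ, Measurable f → Measurable g →
      (∫⁻ v : E3, ∫⁻ w : E3, ENNReal.ofReal (‖v - w‖ ^ γ * |g w| * |f v|)) ≤
        ENNReal.ofReal C * (wSq (max (γ + 2) (3 / 2)) g) ^ ((1 : ℝ) / 2) *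
          (wSq (max (γ + 2) (3 / 2)) f) ^ ((1 : ℝ) / 2) := by
  obtain ⟨A, hA, hbound⟩ := powerKernelBoundedOnL2 hγ
  refine ⟨A.toReal + 1, by positivity, fun f g hf hg => ?_⟩
  have hA' : A ≤ ENNReal.ofReal (A.toReal + 1) :=
    (ENNReal.le_ofReal_iff_toReal_le hA.ne (by positivity)).2 (by linarith)
  simp_rw [wSq_eq_lintegral_sq, ENNReal.ofReal_mul (mul_nonneg (rpow_nonneg (norm_nonneg _) γ)
    (abs_nonneg _)), ENNReal.ofReal_mul (rpow_nonneg (norm_nonneg _) γ)]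
  exact (hbound _ _ hf.abs.ennreal_ofReal hg.abs.ennreal_ofReal).trans (by gcongr)
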